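/- arXiv:1103.3369 — 4 statements merged into one kernel-verified Lean document; each statement's English description precedes it below -/
import Mathlib

section
/- If G is a nontrivial connected graph of order n with rvc(G) = k, and G' is obtained from G by adding a new vertex v adjacent to q vertices of G where q ≥ n − k, then rvc(G') ≤ k. -/
open SimpleGraph

/-- A coloring `c` (using colors `< k`) makes `G` rainbow vertex-connected: every pair of
vertices is joined by a path whose internal vertices receive distinct colors (all `< k`). -/
def IsRainbowVCColoring {V : Type*} (G : SimpleGraph V) (c : V → ℕ) (k : ℕ) : Prop :=
  ∀ u v : V, ∃ p : G.Walk u v, p.IsPath ∧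
    (p.support.tail.dropLast.map c).Nodup ∧
    ∀ x ∈ p.support.tail.dropLast, c x < k

/-- The rainbow vertex-connection number: the least number of colors making `G`
rainbow vertex-connected. -/
noncomputable def rvc {V : Type*} (G : SimpleGraph V) : ℕ :=
  sInf {k | ∃ c : V → ℕ, IsRainbowVCColoring G c k}

/-- The graph obtained from `G` by adding one new vertex (`none`) joined to the
vertices in `S`. -/
def addVertex {V : Type*} (G : SimpleGraph V) (S : Set V) : SimpleGraph (Option V) :=
  SimpleGraph.fromRel (fun x y =>
    match x, y with
    | some a, some b => G.Adj a b
    | none, some a => a ∈ S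
    | _, _ => False)

/-!
Let `c` be a rainbow colouring of `G` with `k` colours and `W = V ∖ S`, so `|W| ≤ k`.
If every `u ∈ W` is reached from some `s ∈ S` by a path whose vertices other than `u` have
distinct colours, then `c` already works for `G'`: the new vertex `v` reaches `u` through `s`.
Otherwise some `u₀ ∈ W` is not reached in this way; then no rainbow path ending at `u₀` has an
internal vertex in `S`, so `G[W]` is connected and every vertex of `S` has a neighbour in `W`.
In that case colour `W` injectively with at most `k` colours, and give `S` and `v` the colour of
a vertex `b` of `W` farthest in `G[W]` from a neighbour `a₀ ∈ W` of some `s₀ ∈ S`. Shortest paths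
of `G[W]` from `a₀` avoid `b` before their end, so `v s₀ a₀ … w` is rainbow; all other pairs are
joined inside `G[W]`, by one edge from `S` into `G[W]`, or through `v`.
-/
def IsRainbow {α : Type*} (c : α → ℕ) (k : ℕ) (l : List α) : Prop :=
  (l.map c).Nodup ∧ ∀ x ∈ l, c x < k

namespace IsRainbow

variable {α β : Type*} {c : α → ℕ} {k : ℕ} {l l' : List α}

theorem sublist (h : IsRainbow c k l) (hl : l'.Sublist l) : IsRainbow c k l' :=
  ⟨h.1.sublist (hl.map c), fun x hx => h.2 x (hl.subset hx)⟩

theorem map_iff {f : β → α} {l : List β} : IsRainbow c k (l.map f) ↔ IsRainbow (c ∘ f) k l := by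
  simp [IsRainbow, List.map_map]

theorem reverse (h : IsRainbow c k l) : IsRainbow c k l.reverse := by
  simpa [IsRainbow, List.map_reverse] using h

theorem of_injective (hl : l.Nodup) (hc : Function.Injective c) (hk : ∀ x, c x < k) :
    IsRainbow c k l :=
  ⟨hl.map hc, fun x _ => hk x⟩

theorem cons_iff {a : α} : IsRainbow c k (a :: l) ↔ c a ∉ l.map c ∧ c a < k ∧ IsRainbow c k l := by
  simp only [IsRainbow, List.map_cons, List.nodup_cons, List.forall_mem_cons]
  tauto

end IsRainbow

theorem exists_injective_lt_of_card_le {α : Type*} [Finite α] {k : ℕ} (h : Nat.card α ≤ k) :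
    ∃ ψ : α → ℕ, Function.Injective ψ ∧ ∀ x, ψ x < k :=
  ⟨fun x => Finite.equivFin α x, Fin.val_injective.comp (Finite.equivFin α).injective,
    fun x => (Finite.equivFin α x).2.trans_le h⟩

namespace SimpleGraph.Walk

variable {V V' : Type*} {G : SimpleGraph V} {G' : SimpleGraph V'} {u v w x : V}

def internals (p : G.Walk u v) : List V := p.support.tail.dropLast

@[simp] theorem internals_nil : (nil : G.Walk u u).internals = [] := rfl

@[simp] theorem internals_cons (h : G.Adj u v) (p : G.Walk v w) :
    (cons h p).internals = p.support.dropLast := rfl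

theorem internals_map (f : G →g G') (p : G.Walk u v) :
    (p.map f).internals = p.internals.map f := by
  rw [internals, Walk.support_map, ← List.map_tail, ← List.map_dropLast, internals]

theorem internals_reverse (p : G.Walk u v) : p.reverse.internals = p.internals.reverse := by
  rw [internals, support_reverse, List.tail_reverse, List.dropLast_reverse, List.tail_dropLast,
    internals]

theorem internals_append {p : G.Walk u v} (hp : ¬p.Nil) (q : G.Walk v w) :
    (p.append q).internals = p.internals ++ q.support.dropLast := by
  have hp' : p.support.dropLast ≠ [] := by simp [← support_dropLast hp]
  rw [internals, support_append_eq_support_dropLast_append, List.tail_append_of_ne_nil hp',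
    List.dropLast_append_of_ne_nil q.support_ne_nil, List.tail_dropLast, internals]

theorem support_dropLast_cons (h : G.Adj u v) (p : G.Walk v w) :
    (cons h p).support.dropLast = u :: p.support.dropLast := by
  simp [List.dropLast_cons_of_ne_nil p.support_ne_nil]

theorem mem_support_iff_mem_dropLast_or_eq {p : G.Walk u v} :
    x ∈ p.support ↔ x ∈ p.support.dropLast ∨ x = v := by
  nth_rw 1 [← p.dropLast_support_concat]
  exact List.mem_append.trans (or_congr_right List.mem_singleton)

theorem internals_sublist_support (p : G.Walk u v) : p.internals.Sublist p.support :=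
  (List.dropLast_sublist _).trans (List.tail_sublist _)

theorem mem_tail_support {p : G.Walk u v} (hx : x ∈ p.support.tail) :
    x ∈ p.internals ∨ x = v := by
  cases p with
  | nil => simp at hx
  | cons h p => exact mem_support_iff_mem_dropLast_or_eq.mp hx

theorem eq_or_mem_internals_or_eq_of_mem_support {p : G.Walk u v} (hx : x ∈ p.support) :
    x = u ∨ x ∈ p.internals ∨ x = v := by
  rw [← p.cons_tail_support, List.mem_cons] at hx
  exact hx.imp_right mem_tail_support

theorem IsPath.start_notMem_internals {p : G.Walk u v} (hp : p.IsPath) : u ∉ p.internals := by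
  have h := hp.support_nodup
  rw [← p.cons_tail_support, List.nodup_cons] at h
  exact fun hu => h.1 (List.mem_of_mem_dropLast hu)

theorem IsPath.end_notMem_dropLast_support {p : G.Walk u v} (hp : p.IsPath) :
    v ∉ p.support.dropLast := by
  have h := hp.support_nodup
  rw [← p.dropLast_support_concat, List.nodup_append] at h
  exact fun hv => h.2.2 v hv v (List.mem_singleton_self v) rfl

end SimpleGraph.Walk

namespace SimpleGraph

variable {V V' : Type*} {G : SimpleGraph V} {G' : SimpleGraph V'} {c : V → ℕ} {c' : V' → ℕ}
  {k : ℕ} {S : Set V} {a b u v w : V}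

/-- Take `b` farthest from `a`: a shortest path from `a` through `b` to `w ≠ b` would give
`dist a w > dist a b`. -/
theorem Connected.exists_forall_exists_isPath_notMem_dropLast_support [Finite V]
    (hG : G.Connected) (a : V) :
    ∃ b, ∀ w, ∃ p : G.Walk a w, p.IsPath ∧ b ∉ p.support.dropLast := by
  classical
  have := hG.nonempty
  obtain ⟨b, hb⟩ := Finite.exists_max (G.dist a)
  refine ⟨b, fun w => ?_⟩
  obtain ⟨p, hp, hlen⟩ := hG.exists_path_of_dist a w
  refine ⟨p, hp, fun hbp => ?_⟩
  by_cases hwb : w = b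
  · exact hp.end_notMem_dropLast_support (hwb ▸ hbp)
  have hbp : b ∈ p.support := List.mem_of_mem_dropLast hbp
  have hlen' := congrArg Walk.length (p.take_spec hbp)
  rw [Walk.length_append] at hlen'
  have : G.dist b w = 0 := by
    have := G.dist_le (p.takeUntil b hbp)
    have := G.dist_le (p.dropUntil b hbp)
    have := hb w
    omega
  exact hwb (hG.dist_eq_zero_iff.mp this).symm

theorem Walk.IsPath.nodup_internals {p : G.Walk u v} (hp : p.IsPath) : p.internals.Nodup :=
  hp.support_nodup.sublist p.internals_sublist_support

def Walk.IsRainbowPath (c : V → ℕ) (k : ℕ) (p : G.Walk u v) : Prop :=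
  p.IsPath ∧ IsRainbow c k p.internals

def RainbowReachable (G : SimpleGraph V) (c : V → ℕ) (k : ℕ) (u v : V) : Prop :=
  ∃ p : G.Walk u v, p.IsRainbowPath c k

@[refl] theorem RainbowReachable.refl (u : V) : G.RainbowReachable c k u u :=
  ⟨.nil, .nil, by simp [IsRainbow]⟩

@[symm] theorem RainbowReachable.symm (h : G.RainbowReachable c k u v) :
    G.RainbowReachable c k v u :=
  let ⟨p, hp, hc⟩ := h
  ⟨p.reverse, hp.reverse, p.internals_reverse ▸ hc.reverse⟩

theorem Walk.IsPath.isRainbowPath_map {p : G.Walk u v} (hp : p.IsPath) {f : G →g G'}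
    (hf : Function.Injective f) (hc : IsRainbow (c' ∘ f) k p.internals) :
    (p.map f).IsRainbowPath c' k :=
  ⟨hp.map hf, by rwa [internals_map, IsRainbow.map_iff]⟩

theorem Walk.IsPath.isRainbowPath_cons {p : G.Walk v w} (hp : p.IsPath) (h : G.Adj u v)
    (hu : u ∉ p.support) (hc : IsRainbow c k p.support.dropLast) :
    (Walk.cons h p).IsRainbowPath c k :=
  ⟨hp.cons hu, hc⟩

theorem Adj.rainbowReachable (h : G.Adj u v) : G.RainbowReachable c k u v :=
  ⟨h.toWalk, h.isPath_toWalk, by simp [Adj.toWalk, IsRainbow]⟩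

theorem IsRainbowVCColoring.preconnected (h : IsRainbowVCColoring G c k) : G.Preconnected :=
  fun u v => let ⟨p, _⟩ := h u v; ⟨p⟩

theorem rvc_le_of_isRainbowVCColoring (h : IsRainbowVCColoring G c k) : rvc G ≤ k :=
  Nat.sInf_le ⟨c, h⟩

theorem rvc_eq_zero_of_not_preconnected (hG : ¬G.Preconnected) : rvc G = 0 := by
  have hempty : {k | ∃ c : V → ℕ, IsRainbowVCColoring G c k} = ∅ :=
    Set.eq_empty_of_forall_notMem fun _ ⟨_, hc⟩ => hG hc.preconnected
  rw [rvc, hempty, Nat.sInf_empty]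

theorem Preconnected.isRainbowVCColoring_of_injective (hG : G.Preconnected)
    (hc : Function.Injective c) (hk : ∀ x, c x < k) : IsRainbowVCColoring G c k := by
  classical
  intro u v
  let p := (hG u v).some.toPath
  exact ⟨p, p.2, IsRainbow.of_injective p.2.nodup_internals hc hk⟩

theorem Preconnected.exists_isRainbowVCColoring_rvc [Finite V] (hG : G.Preconnected) :
    ∃ c, IsRainbowVCColoring G c (rvc G) := by
  obtain ⟨c, hc, hk⟩ := exists_injective_lt_of_card_le (le_refl (Nat.card V))
  exact Nat.sInf_mem (s := {k | ∃ c : V → ℕ, IsRainbowVCColoring G c k})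
    ⟨_, c, hG.isRainbowVCColoring_of_injective hc hk⟩

@[simp] theorem addVertex_adj_some_some : (addVertex G S).Adj (some a) (some b) ↔ G.Adj a b := by
  simpa [addVertex, G.adj_comm b a] using Adj.ne

@[simp] theorem addVertex_adj_none_some : (addVertex G S).Adj none (some a) ↔ a ∈ S := by
  simp [addVertex]

@[simp] theorem addVertex_adj_some_none : (addVertex G S).Adj (some a) none ↔ a ∈ S := by
  simp [addVertex]

def addVertexSome (G : SimpleGraph V) (S : Set V) : G →g addVertex G S :=
  ⟨some, addVertex_adj_some_some.2⟩

theorem not_adj_none_addVertex_empty (x : Option V) : ¬(addVertex G ∅).Adj none x := by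
  rcases x with _ | x <;> simp

theorem not_preconnected_addVertex_empty [Nonempty V] : ¬(addVertex G ∅).Preconnected := by
  intro h
  obtain ⟨p⟩ := h none (some (Classical.arbitrary V))
  cases p with
  | cons h _ => exact not_adj_none_addVertex_empty _ h

theorem isRainbowVCColoring_option {H : SimpleGraph (Option V)} {c : Option V → ℕ}
    (hnone : ∀ v, H.RainbowReachable c k none (some v))
    (hsome : ∀ u v, H.RainbowReachable c k (some u) (some v)) : IsRainbowVCColoring H c k := by
  rintro (_ | u) (_ | v)
  exacts [RainbowReachable.refl _, hnone v, (hnone u).symm, hsome u v]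

theorem rainbowReachable_addVertex_of_mem_of_mem {c : Option V → ℕ} (hk : c none < k)
    (hu : u ∈ S) (hv : v ∈ S) : (addVertex G S).RainbowReachable c k (some u) (some v) := by
  obtain rfl | huv := eq_or_ne u v
  · exact RainbowReachable.refl _
  refine ⟨_, (addVertex_adj_none_some.2 hv).isPath_toWalk.isRainbowPath_cons
    (addVertex_adj_some_none.2 hu) ?_ ?_⟩
  · simp [Adj.toWalk, huv]
  · simp [Adj.toWalk, IsRainbow, hk]

/-- Prefixed with the new vertex, such a path becomes a rainbow path of `addVertex G S`. -/
def RainbowReachableFrom (G : SimpleGraph V) (c : V → ℕ) (k : ℕ) (S : Set V) (u : V) : Prop :=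
  ∃ s ∈ S, ∃ p : G.Walk s u, p.IsPath ∧ IsRainbow c k p.support.dropLast

theorem isRainbowVCColoring_addVertex_of_forall_rainbowReachableFrom
    (hc : IsRainbowVCColoring G c k) (hS : ∀ u ∉ S, G.RainbowReachableFrom c k S u) :
    IsRainbowVCColoring (addVertex G S) (Option.elim' 0 c) k := by
  have hf : Function.Injective (addVertexSome G S) := Option.some_injective V
  refine isRainbowVCColoring_option (fun u => ?_) (fun u v => ?_)
  · by_cases hu : u ∈ S
    · exact (addVertex_adj_none_some.2 hu).rainbowReachable
    obtain ⟨s, hs, p, hp, hpc⟩ := hS u hu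
    refine ⟨_, (hp.map hf).isRainbowPath_cons (addVertex_adj_none_some.2 hs) ?_ ?_⟩
    · simp [addVertexSome, Walk.support_map]
    · rwa [Walk.support_map, ← List.map_dropLast, IsRainbow.map_iff]
  · obtain ⟨p, hp, hpc⟩ := hc u v
    exact ⟨_, hp.isRainbowPath_map hf hpc⟩

section NotRainbowReachableFrom

variable {u₀ : V} (hc : IsRainbowVCColoring G c k) (hu₀S : u₀ ∉ S)
  (hu₀ : ¬G.RainbowReachableFrom c k S u₀)
include hu₀

theorem notMem_of_mem_internals_of_not_rainbowReachableFrom {p : G.Walk w u₀}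
    (hp : p.IsRainbowPath c k) {x : V} (hx : x ∈ p.internals) : x ∉ S := by
  classical
  intro hxS
  have hxp : x ∈ p.support := p.internals_sublist_support.subset hx
  have hwx : w ≠ x := fun h => hp.1.start_notMem_internals (h ▸ hx)
  refine hu₀ ⟨x, hxS, p.dropUntil x hxp, hp.1.dropUntil hxp, hp.2.sublist ?_⟩
  have h := Walk.internals_append (Walk.not_nil_of_ne (p := p.takeUntil x hxp) hwx)
    (p.dropUntil x hxp)
  rw [p.take_spec hxp] at h
  exact h ▸ List.sublist_append_right _ _

include hc hu₀S

theorem connected_induce_compl_of_not_rainbowReachableFrom : (G.induce Sᶜ).Connected := by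
  rw [connected_iff_exists_forall_reachable]
  refine ⟨⟨u₀, hu₀S⟩, fun ⟨w, hw⟩ => ?_⟩
  obtain ⟨p, hp⟩ := hc w u₀
  have hsupp : ∀ x ∈ p.support, x ∈ Sᶜ := fun x hx => by
    rcases Walk.eq_or_mem_internals_or_eq_of_mem_support hx with rfl | hx | rfl
    exacts [hw, notMem_of_mem_internals_of_not_rainbowReachableFrom hu₀ hp hx, hu₀S]
  exact ⟨(p.induce Sᶜ hsupp).reverse⟩

theorem exists_adj_notMem_of_not_rainbowReachableFrom {s : V} (hs : s ∈ S) :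
    ∃ a ∉ S, G.Adj s a := by
  obtain ⟨p, hp⟩ := hc s u₀
  have hp' : ¬p.Nil := Walk.not_nil_of_ne fun h => hu₀S (h ▸ hs)
  refine ⟨p.snd, ?_, Walk.adj_snd hp'⟩
  rcases Walk.mem_tail_support (Walk.snd_mem_tail_support hp') with h | h
  · exact notMem_of_mem_internals_of_not_rainbowReachableFrom hu₀ hp h
  · rwa [h]

end NotRainbowReachableFrom

def induceComplToAddVertex (G : SimpleGraph V) (S : Set V) : G.induce Sᶜ →g addVertex G S :=
  ⟨fun x => some x.1, fun h => addVertex_adj_some_some.2 (induce_adj.1 h)⟩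

theorem induceComplToAddVertex_injective :
    Function.Injective (induceComplToAddVertex G S) :=
  (Option.some_injective V).comp Subtype.val_injective

open Classical in
noncomputable def extendColoring (S : Set V) (ψ : ↥Sᶜ → ℕ) (α : ℕ) : Option V → ℕ
  | none => α
  | some x => if h : x ∈ S then α else ψ ⟨x, h⟩

section extendColoring

variable {ψ : ↥Sᶜ → ℕ} {α : ℕ} {s : V}

@[simp] theorem extendColoring_comp_induceComplToAddVertex :
    extendColoring S ψ α ∘ induceComplToAddVertex G S = ψ :=
  funext fun x => by simp [extendColoring, induceComplToAddVertex, show x.1 ∉ S from x.2]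

theorem extendColoring_some_of_mem (hs : s ∈ S) : extendColoring S ψ α (some s) = α := by
  simp [extendColoring, hs]

theorem some_notMem_support_map_induceComplToAddVertex {x y : ↥Sᶜ} (hs : s ∈ S)
    (p : (G.induce Sᶜ).Walk x y) : some s ∉ (p.map (induceComplToAddVertex G S)).support := by
  rw [Walk.support_map, List.mem_map]
  rintro ⟨a, -, ha⟩
  exact a.2 (Option.some_injective V ha ▸ hs)

theorem none_notMem_support_map_induceComplToAddVertex {x y : ↥Sᶜ}
    (p : (G.induce Sᶜ).Walk x y) : none ∉ (p.map (induceComplToAddVertex G S)).support := by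
  rw [Walk.support_map, List.mem_map]
  rintro ⟨a, -, ⟨⟩⟩

variable (hψ : Function.Injective ψ) (hψk : ∀ x, ψ x < k)
include hψ hψk

theorem isRainbow_extendColoring_map_dropLast_support {x y : ↥Sᶜ}
    {p : (G.induce Sᶜ).Walk x y} (hp : p.IsPath) :
    IsRainbow (extendColoring S ψ α) k (p.map (induceComplToAddVertex G S)).support.dropLast := by
  rw [Walk.support_map, ← List.map_dropLast, IsRainbow.map_iff,
    extendColoring_comp_induceComplToAddVertex]
  exact .of_injective (hp.support_nodup.sublist (List.dropLast_sublist _)) hψ hψk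

theorem rainbowReachable_extendColoring_compl_compl
    (hW : (G.induce Sᶜ).Preconnected) (x y : ↥Sᶜ) :
    (addVertex G S).RainbowReachable (extendColoring S ψ α) k (some x) (some y) := by
  classical
  let p := (hW x y).some.toPath
  refine ⟨_, p.2.isRainbowPath_map (f := induceComplToAddVertex G S)
    induceComplToAddVertex_injective ?_⟩
  rw [extendColoring_comp_induceComplToAddVertex]
  exact .of_injective p.2.nodup_internals hψ hψk

theorem rainbowReachable_extendColoring_mem_compl
    (hW : (G.induce Sᶜ).Preconnected) (hs : s ∈ S) (a y : ↥Sᶜ) (hsa : G.Adj s a) :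
    (addVertex G S).RainbowReachable (extendColoring S ψ α) k (some s) (some y) := by
  classical
  let p := (hW a y).some.toPath
  have hsa' : (addVertex G S).Adj (some s) (induceComplToAddVertex G S a) :=
    addVertex_adj_some_some.2 hsa
  exact ⟨_, (p.2.map induceComplToAddVertex_injective).isRainbowPath_cons hsa'
    (some_notMem_support_map_induceComplToAddVertex hs _)
    (isRainbow_extendColoring_map_dropLast_support hψ hψk p.2)⟩

theorem rainbowReachable_extendColoring_none_compl
    (hs : s ∈ S) (a b y : ↥Sᶜ) (hsa : G.Adj s a)
    (p : (G.induce Sᶜ).Walk a y) (hp : p.IsPath) (hbp : b ∉ p.support.dropLast) :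
    (addVertex G S).RainbowReachable (extendColoring S ψ (ψ b)) k none (some y) := by
  have hp' := hp.map (induceComplToAddVertex_injective (G := G))
  have hsa' : (addVertex G S).Adj (some s) (induceComplToAddVertex G S a) :=
    addVertex_adj_some_some.2 hsa
  refine ⟨_, (hp'.cons (h := hsa')
    (some_notMem_support_map_induceComplToAddVertex hs p)).isRainbowPath_cons
    (addVertex_adj_none_some.2 hs) ?_ ?_⟩
  · rw [Walk.support_cons, List.mem_cons, not_or]
    exact ⟨nofun, none_notMem_support_map_induceComplToAddVertex p⟩
  · rw [Walk.support_dropLast_cons, IsRainbow.cons_iff, extendColoring_some_of_mem hs]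
    refine ⟨?_, hψk b, isRainbow_extendColoring_map_dropLast_support hψ hψk hp⟩
    rw [Walk.support_map, ← List.map_dropLast, List.map_map,
      extendColoring_comp_induceComplToAddVertex]
    exact fun h => hbp (List.mem_map.mp h |>.elim fun z hz => hψ hz.2 ▸ hz.1)

end extendColoring

theorem exists_isRainbowVCColoring_addVertex_of_connected_induce_compl [Finite V]
    (hS : S.Nonempty) (hW : (G.induce Sᶜ).Connected) (hN : ∀ s ∈ S, ∃ a ∉ S, G.Adj s a)
    (hk : Nat.card ↥Sᶜ ≤ k) : ∃ c, IsRainbowVCColoring (addVertex G S) c k := by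
  obtain ⟨s₀, hs₀⟩ := hS
  obtain ⟨a₀, ha₀, hs₀a₀⟩ := hN s₀ hs₀
  obtain ⟨ψ, hψ, hψk⟩ := exists_injective_lt_of_card_le hk
  obtain ⟨b, hb⟩ := hW.exists_forall_exists_isPath_notMem_dropLast_support ⟨a₀, ha₀⟩
  have hSW (s : V) (hs : s ∈ S) (y : ↥Sᶜ) :
      (addVertex G S).RainbowReachable (extendColoring S ψ (ψ b)) k (some s) (some y) :=
    let ⟨a, ha, hsa⟩ := hN s hs
    rainbowReachable_extendColoring_mem_compl hψ hψk hW.preconnected hs ⟨a, ha⟩ y hsa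
  refine ⟨extendColoring S ψ (ψ b), isRainbowVCColoring_option (fun v => ?_) (fun u v => ?_)⟩
  · by_cases hv : v ∈ S
    · exact (addVertex_adj_none_some.2 hv).rainbowReachable
    obtain ⟨p, hp, hbp⟩ := hb ⟨v, hv⟩
    exact rainbowReachable_extendColoring_none_compl hψ hψk hs₀ _ b _ hs₀a₀ p hp hbp
  · by_cases hu : u ∈ S <;> by_cases hv : v ∈ S
    · exact rainbowReachable_addVertex_of_mem_of_mem (hψk b) hu hv
    · exact hSW u hu ⟨v, hv⟩
    · exact (hSW v hv ⟨u, hu⟩).symm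
    · exact rainbowReachable_extendColoring_compl_compl hψ hψk hW.preconnected
        ⟨u, hu⟩ ⟨v, hv⟩

end SimpleGraph

theorem rvc_addVertex_le_general {V : Type*} [Fintype V] (G : SimpleGraph V)
    (hG : G.Connected) (k q : ℕ) (hk : rvc G = k)
    (S : Finset V) (hq : S.card = q) (hge : Fintype.card V - k ≤ q) :
    rvc (addVertex G (S : Set V)) ≤ k := by
  obtain ⟨c, hc⟩ : ∃ c, IsRainbowVCColoring G c k :=
    hk ▸ hG.preconnected.exists_isRainbowVCColoring_rvc
  rcases S.eq_empty_or_nonempty with rfl | hS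
  · -- the new vertex is isolated, so no colouring works and `rvc` is `sInf ∅ = 0`
    have := hG.nonempty
    rw [Finset.coe_empty, rvc_eq_zero_of_not_preconnected not_preconnected_addVertex_empty]
    exact Nat.zero_le k
  by_cases hA : ∀ u ∉ (S : Set V), G.RainbowReachableFrom c k S u
  · exact rvc_le_of_isRainbowVCColoring
      (isRainbowVCColoring_addVertex_of_forall_rainbowReachableFrom hc hA)
  push Not at hA
  obtain ⟨u₀, hu₀S, hu₀⟩ := hA
  have hcard : Nat.card ↥(S : Set V)ᶜ ≤ k := by
    rw [Nat.card_coe_set_eq, Set.ncard_compl, Set.ncard_coe_finset, Nat.card_eq_fintype_card]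
    omega
  obtain ⟨c', hc'⟩ := exists_isRainbowVCColoring_addVertex_of_connected_induce_compl
    (Finset.coe_nonempty.2 hS) (connected_induce_compl_of_not_rainbowReachableFrom hc hu₀S hu₀)
    (fun s hs => exists_adj_notMem_of_not_rainbowReachableFrom hc hu₀S hu₀ hs) hcard
  exact rvc_le_of_isRainbowVCColoring hc'

theorem rvc_addVertex_le {V : Type*} [Fintype V] (G : SimpleGraph V)
    (hG : G.Connected) (hn : 2 ≤ Fintype.card V) (k q : ℕ) (hk : rvc G = k)
    (S : Finset V) (hq : S.card = q) (hge : Fintype.card V - k ≤ q) :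
    rvc (addVertex G (S : Set V)) ≤ k :=
  rvc_addVertex_le_general G hG k q hk S hq hge
end

section
/- If G is a connected graph on 5 vertices whose complement is also connected, then rvc(G) + rvc(complement of G) ≤ 4. -/
open SimpleGraph

/-- Every pair of vertices is at distance ≤ 2. -/
def DiamTwo {V : Type*} (G : SimpleGraph V) : Prop :=
  ∀ u v : V, u = v ∨ G.Adj u v ∨ ∃ w, G.Adj u w ∧ G.Adj w v

/-- There is an adjacent dominating pair. -/
def DomPair {V : Type*} (G : SimpleGraph V) : Prop :=
  ∃ x y, G.Adj x y ∧ ∀ z, z = x ∨ z = y ∨ G.Adj z x ∨ G.Adj z y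

/-- `G` is exactly a path on five vertices. -/
def IsP5 {V : Type*} (G : SimpleGraph V) : Prop :=
  ∃ v0 v1 v2 v3 v4 : V,
    (∀ x : V, x = v0 ∨ x = v1 ∨ x = v2 ∨ x = v3 ∨ x = v4) ∧
    (v0 ≠ v1 ∧ v0 ≠ v2 ∧ v0 ≠ v3 ∧ v0 ≠ v4 ∧ v1 ≠ v2 ∧ v1 ≠ v3 ∧ v1 ≠ v4 ∧
      v2 ≠ v3 ∧ v2 ≠ v4 ∧ v3 ≠ v4) ∧
    (G.Adj v0 v1 ∧ G.Adj v1 v2 ∧ G.Adj v2 v3 ∧ G.Adj v3 v4) ∧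
    (¬G.Adj v0 v2 ∧ ¬G.Adj v0 v3 ∧ ¬G.Adj v0 v4 ∧ ¬G.Adj v1 v3 ∧ ¬G.Adj v1 v4 ∧
      ¬G.Adj v2 v4)

lemma rvc_le {V : Type*} {G : SimpleGraph V} {k : ℕ}
    (h : ∃ c : V → ℕ, IsRainbowVCColoring G c k) : rvc G ≤ k :=
  Nat.sInf_le h

lemma rvc_le_one_of_diamTwo {V : Type*} {G : SimpleGraph V} (h : DiamTwo G) : rvc G ≤ 1 := by
  refine rvc_le ⟨fun _ => 0, fun u v => ?_⟩
  rcases h u v with rfl | hadj | ⟨w, h1, h2⟩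
  · exact ⟨SimpleGraph.Walk.nil, by simp [SimpleGraph.Walk.isPath_def], by simp, by simp⟩
  · exact ⟨SimpleGraph.Walk.cons hadj SimpleGraph.Walk.nil,
      by simp [SimpleGraph.Walk.isPath_def, hadj.ne], by simp, by simp⟩
  · rcases eq_or_ne u v with rfl | huv
    · exact ⟨SimpleGraph.Walk.nil, by simp [SimpleGraph.Walk.isPath_def], by simp, by simp⟩
    · exact ⟨SimpleGraph.Walk.cons h1 (SimpleGraph.Walk.cons h2 SimpleGraph.Walk.nil),
        by simp [SimpleGraph.Walk.isPath_def, h1.ne, h2.ne, huv], by simp, by simp⟩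

lemma rvc_le_two_of_domPair {V : Type*} {G : SimpleGraph V} (h : DomPair G) : rvc G ≤ 2 := by
  classical
  obtain ⟨x, y, hxy, hdom⟩ := h
  refine rvc_le ⟨fun z => if z = y then 1 else 0, fun u v => ?_⟩
  rcases eq_or_ne u v with rfl | huv
  · exact ⟨SimpleGraph.Walk.nil, by simp [SimpleGraph.Walk.isPath_def], by simp, by simp⟩
  by_cases hadj : G.Adj u v
  · exact ⟨SimpleGraph.Walk.cons hadj SimpleGraph.Walk.nil,
      by simp [SimpleGraph.Walk.isPath_def, hadj.ne], by simp, by simp⟩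
  -- u,v not adjacent, u ≠ v
  have hu := hdom u
  have hv := hdom v
  -- helper for length-2 paths
  have two : ∀ w : V, G.Adj u w → G.Adj w v →
      ∃ p : G.Walk u v, p.IsPath ∧ ((p.support.tail.dropLast.map
        (fun z => if z = y then 1 else 0)).Nodup) ∧
        ∀ x_1 ∈ p.support.tail.dropLast, (if x_1 = y then 1 else 0) < 2 := by
    intro w h1 h2
    refine ⟨SimpleGraph.Walk.cons h1 (SimpleGraph.Walk.cons h2 SimpleGraph.Walk.nil),
      by simp [SimpleGraph.Walk.isPath_def, h1.ne, h2.ne, huv], by simp, ?_⟩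
    intro z hz; simp at hz; subst hz; split <;> omega
  have three : ∀ a b : V, G.Adj u a → G.Adj a b → G.Adj b v → u ≠ b → a ≠ v →
      ((if a = y then (1:ℕ) else 0) ≠ (if b = y then 1 else 0)) →
      ∃ p : G.Walk u v, p.IsPath ∧ ((p.support.tail.dropLast.map
        (fun z => if z = y then 1 else 0)).Nodup) ∧
        ∀ x_1 ∈ p.support.tail.dropLast, (if x_1 = y then 1 else 0) < 2 := by
    intro a b h1 h2 h3 hub hav hcol
    refine ⟨SimpleGraph.Walk.cons h1 (SimpleGraph.Walk.cons h2
      (SimpleGraph.Walk.cons h3 SimpleGraph.Walk.nil)),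
      by simp [SimpleGraph.Walk.isPath_def, h1.ne, h2.ne, h3.ne, huv, hub, hav], ?_, ?_⟩
    · simp only [SimpleGraph.Walk.support_cons, SimpleGraph.Walk.support_nil,
        List.tail_cons, List.dropLast, List.map]
      simp [hcol]
    · intro z hz
      simp only [SimpleGraph.Walk.support_cons, SimpleGraph.Walk.support_nil] at hz
      simp at hz
      rcases hz with rfl | rfl <;> split <;> omega
  rcases hu with rfl | rfl | hux | huy
  · -- u = x
    rcases hv with rfl | rfl | hvx | hvy
    · exact absurd rfl huv
    · exact absurd hxy hadj
    · exact absurd hvx.symm hadj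
    · exact two y hxy hvy.symm
  · -- u = y
    rcases hv with rfl | rfl | hvx | hvy
    · exact absurd hxy.symm hadj
    · exact absurd rfl huv
    · exact two x hxy.symm hvx.symm
    · exact absurd hvy.symm hadj
  · -- u ~ x
    rcases hv with rfl | rfl | hvx | hvy
    · exact absurd hux hadj
    · -- v = y
      exact two x hux hxy
    · exact two x hux hvx.symm
    · -- u~x, v~y : u-x-y-v
      refine three x y hux hxy hvy.symm ?_ ?_ ?_
      · rintro rfl; exact hadj (hvy.symm)
      · rintro rfl; exact hadj hux
      · simp [hxy.ne]
  · -- u ~ y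
    rcases hv with rfl | rfl | hvx | hvy
    · -- v = x
      exact two y huy hxy.symm
    · exact absurd huy hadj
    · -- u~y, v~x : u-y-x-v
      refine three y x huy hxy.symm hvx.symm ?_ ?_ ?_
      · rintro rfl; exact hadj hvx.symm
      · rintro rfl; exact hadj huy
      · simp [hxy.ne]
    · exact two y huy hvy.symm

lemma rvc_le_three_of_isP5 {V : Type*} {G : SimpleGraph V} (h : IsP5 G) : rvc G ≤ 3 := by
  classical
  obtain ⟨v0, v1, v2, v3, v4, hcover,
    ⟨hne01, hne02, hne03, hne04, hne12, hne13, hne14, hne23, hne24, hne34⟩,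
    ⟨ha01, ha12, ha23, ha34⟩, ⟨hn02, hn03, hn04, hn13, hn14, hn24⟩⟩ := h
  have hne10 := hne01.symm; have hne20 := hne02.symm; have hne30 := hne03.symm
  have hne40 := hne04.symm; have hne21 := hne12.symm; have hne31 := hne13.symm
  have hne41 := hne14.symm; have hne32 := hne23.symm; have hne42 := hne24.symm
  have hne43 := hne34.symm
  refine rvc_le ⟨fun z => if z = v2 then 1 else if z = v3 then 2 else 0, fun u v => ?_⟩
  rcases hcover u with rfl | rfl | rfl | rfl | rfl <;>
    rcases hcover v with rfl | rfl | rfl | rfl | rfl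
  · refine ⟨SimpleGraph.Walk.nil, ?_, ?_, ?_⟩
    · simp_all [SimpleGraph.Walk.isPath_def]
    · simp_all
    · intro x _; dsimp only; split_ifs <;> omega
  · refine ⟨(SimpleGraph.Walk.cons ha01 SimpleGraph.Walk.nil), ?_, ?_, ?_⟩
    · simp_all [SimpleGraph.Walk.isPath_def]
    · simp_all
    · intro x _; dsimp only; split_ifs <;> omega
  · refine ⟨(SimpleGraph.Walk.cons ha01 (SimpleGraph.Walk.cons ha12 SimpleGraph.Walk.nil)), ?_, ?_, ?_⟩
    · simp_all [SimpleGraph.Walk.isPath_def]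
    · simp_all
    · intro x _; dsimp only; split_ifs <;> omega
  · refine ⟨(SimpleGraph.Walk.cons ha01 (SimpleGraph.Walk.cons ha12 (SimpleGraph.Walk.cons ha23 SimpleGraph.Walk.nil))), ?_, ?_, ?_⟩
    · simp_all [SimpleGraph.Walk.isPath_def]
    · simp_all
    · intro x _; dsimp only; split_ifs <;> omega
  · refine ⟨(SimpleGraph.Walk.cons ha01 (SimpleGraph.Walk.cons ha12 (SimpleGraph.Walk.cons ha23 (SimpleGraph.Walk.cons ha34 SimpleGraph.Walk.nil)))), ?_, ?_, ?_⟩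
    · simp_all [SimpleGraph.Walk.isPath_def]
    · simp_all
    · intro x _; dsimp only; split_ifs <;> omega
  · refine ⟨(SimpleGraph.Walk.cons ha01.symm SimpleGraph.Walk.nil), ?_, ?_, ?_⟩
    · simp_all [SimpleGraph.Walk.isPath_def]
    · simp_all
    · intro x _; dsimp only; split_ifs <;> omega
  · refine ⟨SimpleGraph.Walk.nil, ?_, ?_, ?_⟩
    · simp_all [SimpleGraph.Walk.isPath_def]
    · simp_all
    · intro x _; dsimp only; split_ifs <;> omega
  · refine ⟨(SimpleGraph.Walk.cons ha12 SimpleGraph.Walk.nil), ?_, ?_, ?_⟩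
    · simp_all [SimpleGraph.Walk.isPath_def]
    · simp_all
    · intro x _; dsimp only; split_ifs <;> omega
  · refine ⟨(SimpleGraph.Walk.cons ha12 (SimpleGraph.Walk.cons ha23 SimpleGraph.Walk.nil)), ?_, ?_, ?_⟩
    · simp_all [SimpleGraph.Walk.isPath_def]
    · simp_all
    · intro x _; dsimp only; split_ifs <;> omega
  · refine ⟨(SimpleGraph.Walk.cons ha12 (SimpleGraph.Walk.cons ha23 (SimpleGraph.Walk.cons ha34 SimpleGraph.Walk.nil))), ?_, ?_, ?_⟩
    · simp_all [SimpleGraph.Walk.isPath_def]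
    · simp_all
    · intro x _; dsimp only; split_ifs <;> omega
  · refine ⟨(SimpleGraph.Walk.cons ha12.symm (SimpleGraph.Walk.cons ha01.symm SimpleGraph.Walk.nil)), ?_, ?_, ?_⟩
    · simp_all [SimpleGraph.Walk.isPath_def]
    · simp_all
    · intro x _; dsimp only; split_ifs <;> omega
  · refine ⟨(SimpleGraph.Walk.cons ha12.symm SimpleGraph.Walk.nil), ?_, ?_, ?_⟩
    · simp_all [SimpleGraph.Walk.isPath_def]
    · simp_all
    · intro x _; dsimp only; split_ifs <;> omega
  · refine ⟨SimpleGraph.Walk.nil, ?_, ?_, ?_⟩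
    · simp_all [SimpleGraph.Walk.isPath_def]
    · simp_all
    · intro x _; dsimp only; split_ifs <;> omega
  · refine ⟨(SimpleGraph.Walk.cons ha23 SimpleGraph.Walk.nil), ?_, ?_, ?_⟩
    · simp_all [SimpleGraph.Walk.isPath_def]
    · simp_all
    · intro x _; dsimp only; split_ifs <;> omega
  · refine ⟨(SimpleGraph.Walk.cons ha23 (SimpleGraph.Walk.cons ha34 SimpleGraph.Walk.nil)), ?_, ?_, ?_⟩
    · simp_all [SimpleGraph.Walk.isPath_def]
    · simp_all
    · intro x _; dsimp only; split_ifs <;> omega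
  · refine ⟨(SimpleGraph.Walk.cons ha23.symm (SimpleGraph.Walk.cons ha12.symm (SimpleGraph.Walk.cons ha01.symm SimpleGraph.Walk.nil))), ?_, ?_, ?_⟩
    · simp_all [SimpleGraph.Walk.isPath_def]
    · simp_all
    · intro x _; dsimp only; split_ifs <;> omega
  · refine ⟨(SimpleGraph.Walk.cons ha23.symm (SimpleGraph.Walk.cons ha12.symm SimpleGraph.Walk.nil)), ?_, ?_, ?_⟩
    · simp_all [SimpleGraph.Walk.isPath_def]
    · simp_all
    · intro x _; dsimp only; split_ifs <;> omega
  · refine ⟨(SimpleGraph.Walk.cons ha23.symm SimpleGraph.Walk.nil), ?_, ?_, ?_⟩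
    · simp_all [SimpleGraph.Walk.isPath_def]
    · simp_all
    · intro x _; dsimp only; split_ifs <;> omega
  · refine ⟨SimpleGraph.Walk.nil, ?_, ?_, ?_⟩
    · simp_all [SimpleGraph.Walk.isPath_def]
    · simp_all
    · intro x _; dsimp only; split_ifs <;> omega
  · refine ⟨(SimpleGraph.Walk.cons ha34 SimpleGraph.Walk.nil), ?_, ?_, ?_⟩
    · simp_all [SimpleGraph.Walk.isPath_def]
    · simp_all
    · intro x _; dsimp only; split_ifs <;> omega
  · refine ⟨(SimpleGraph.Walk.cons ha34.symm (SimpleGraph.Walk.cons ha23.symm (SimpleGraph.Walk.cons ha12.symm (SimpleGraph.Walk.cons ha01.symm SimpleGraph.Walk.nil)))), ?_, ?_, ?_⟩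
    · simp_all [SimpleGraph.Walk.isPath_def]
    · simp_all
    · intro x _; dsimp only; split_ifs <;> omega
  · refine ⟨(SimpleGraph.Walk.cons ha34.symm (SimpleGraph.Walk.cons ha23.symm (SimpleGraph.Walk.cons ha12.symm SimpleGraph.Walk.nil))), ?_, ?_, ?_⟩
    · simp_all [SimpleGraph.Walk.isPath_def]
    · simp_all
    · intro x _; dsimp only; split_ifs <;> omega
  · refine ⟨(SimpleGraph.Walk.cons ha34.symm (SimpleGraph.Walk.cons ha23.symm SimpleGraph.Walk.nil)), ?_, ?_, ?_⟩
    · simp_all [SimpleGraph.Walk.isPath_def]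
    · simp_all
    · intro x _; dsimp only; split_ifs <;> omega
  · refine ⟨(SimpleGraph.Walk.cons ha34.symm SimpleGraph.Walk.nil), ?_, ?_, ?_⟩
    · simp_all [SimpleGraph.Walk.isPath_def]
    · simp_all
    · intro x _; dsimp only; split_ifs <;> omega
  · refine ⟨SimpleGraph.Walk.nil, ?_, ?_, ?_⟩
    · simp_all [SimpleGraph.Walk.isPath_def]
    · simp_all
    · intro x _; dsimp only; split_ifs <;> omega

lemma diamTwo_compl_of_isP5 {V : Type*} {G : SimpleGraph V} (h : IsP5 G) : DiamTwo Gᶜ := by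
  obtain ⟨v0, v1, v2, v3, v4, hcover,
    ⟨hne01, hne02, hne03, hne04, hne12, hne13, hne14, hne23, hne24, hne34⟩,
    ⟨ha01, ha12, ha23, ha34⟩, ⟨hn02, hn03, hn04, hn13, hn14, hn24⟩⟩ := h
  have hne10 := hne01.symm; have hne20 := hne02.symm; have hne30 := hne03.symm
  have hne40 := hne04.symm; have hne21 := hne12.symm; have hne31 := hne13.symm
  have hne41 := hne14.symm; have hne32 := hne23.symm; have hne42 := hne24.symm
  have hne43 := hne34.symm
  intro u v
  rcases hcover u with rfl | rfl | rfl | rfl | rfl <;>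
    rcases hcover v with rfl | rfl | rfl | rfl | rfl
  · left; rfl
  · right; right; refine ⟨v3, ?_, ?_⟩ <;> rw [SimpleGraph.compl_adj] <;> constructor <;> first | assumption | (intro hcontra; exact absurd hcontra.symm (by assumption))
  · right; left; rw [SimpleGraph.compl_adj]; constructor <;> first | assumption | (intro hcontra; exact absurd hcontra.symm (by assumption))
  · right; left; rw [SimpleGraph.compl_adj]; constructor <;> first | assumption | (intro hcontra; exact absurd hcontra.symm (by assumption))
  · right; left; rw [SimpleGraph.compl_adj]; constructor <;> first | assumption | (intro hcontra; exact absurd hcontra.symm (by assumption))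
  · right; right; refine ⟨v3, ?_, ?_⟩ <;> rw [SimpleGraph.compl_adj] <;> constructor <;> first | assumption | (intro hcontra; exact absurd hcontra.symm (by assumption))
  · left; rfl
  · right; right; refine ⟨v4, ?_, ?_⟩ <;> rw [SimpleGraph.compl_adj] <;> constructor <;> first | assumption | (intro hcontra; exact absurd hcontra.symm (by assumption))
  · right; left; rw [SimpleGraph.compl_adj]; constructor <;> first | assumption | (intro hcontra; exact absurd hcontra.symm (by assumption))
  · right; left; rw [SimpleGraph.compl_adj]; constructor <;> first | assumption | (intro hcontra; exact absurd hcontra.symm (by assumption))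
  · right; left; rw [SimpleGraph.compl_adj]; constructor <;> first | assumption | (intro hcontra; exact absurd hcontra.symm (by assumption))
  · right; right; refine ⟨v4, ?_, ?_⟩ <;> rw [SimpleGraph.compl_adj] <;> constructor <;> first | assumption | (intro hcontra; exact absurd hcontra.symm (by assumption))
  · left; rfl
  · right; right; refine ⟨v0, ?_, ?_⟩ <;> rw [SimpleGraph.compl_adj] <;> constructor <;> first | assumption | (intro hcontra; exact absurd hcontra.symm (by assumption))
  · right; left; rw [SimpleGraph.compl_adj]; constructor <;> first | assumption | (intro hcontra; exact absurd hcontra.symm (by assumption))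
  · right; left; rw [SimpleGraph.compl_adj]; constructor <;> first | assumption | (intro hcontra; exact absurd hcontra.symm (by assumption))
  · right; left; rw [SimpleGraph.compl_adj]; constructor <;> first | assumption | (intro hcontra; exact absurd hcontra.symm (by assumption))
  · right; right; refine ⟨v0, ?_, ?_⟩ <;> rw [SimpleGraph.compl_adj] <;> constructor <;> first | assumption | (intro hcontra; exact absurd hcontra.symm (by assumption))
  · left; rfl
  · right; right; refine ⟨v1, ?_, ?_⟩ <;> rw [SimpleGraph.compl_adj] <;> constructor <;> first | assumption | (intro hcontra; exact absurd hcontra.symm (by assumption))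
  · right; left; rw [SimpleGraph.compl_adj]; constructor <;> first | assumption | (intro hcontra; exact absurd hcontra.symm (by assumption))
  · right; left; rw [SimpleGraph.compl_adj]; constructor <;> first | assumption | (intro hcontra; exact absurd hcontra.symm (by assumption))
  · right; left; rw [SimpleGraph.compl_adj]; constructor <;> first | assumption | (intro hcontra; exact absurd hcontra.symm (by assumption))
  · right; right; refine ⟨v1, ?_, ?_⟩ <;> rw [SimpleGraph.compl_adj] <;> constructor <;> first | assumption | (intro hcontra; exact absurd hcontra.symm (by assumption))
  · left; rfl

lemma exists_notin {V : Type*} [Fintype V] [DecidableEq V]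
    (hV : Fintype.card V = 5) (u a b v : V) :
    ∃ w : V, w ∉ ({u, a, b, v} : Finset V) := by
  by_contra hcon
  push_neg at hcon
  have hsub : (Finset.univ : Finset V) ⊆ {u, a, b, v} := fun z _ => hcon z
  have h1 := Finset.card_le_card hsub
  rw [Finset.card_univ, hV] at h1
  have h4 : ({u, a, b, v} : Finset V).card ≤ 4 := by
    refine (Finset.card_insert_le _ _).trans (Nat.succ_le_succ ?_)
    refine (Finset.card_insert_le _ _).trans (Nat.succ_le_succ ?_)
    refine (Finset.card_insert_le _ _).trans (Nat.succ_le_succ ?_)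
    simp
  omega

lemma cover_of_card5 {V : Type*} [Fintype V] [DecidableEq V]
    (hV : Fintype.card V = 5) (a b c d e : V)
    (h1 : a ≠ b) (h2 : a ≠ c) (h3 : a ≠ d) (h4 : a ≠ e) (h5 : b ≠ c) (h6 : b ≠ d)
    (h7 : b ≠ e) (h8 : c ≠ d) (h9 : c ≠ e) (h10 : d ≠ e) :
    ∀ x : V, x = a ∨ x = b ∨ x = c ∨ x = d ∨ x = e := by
  have hcard5 : ({a, b, c, d, e} : Finset V).card = 5 := by
    rw [Finset.card_insert_of_notMem (by simp [h1, h2, h3, h4]),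
        Finset.card_insert_of_notMem (by simp [h5, h6, h7]),
        Finset.card_insert_of_notMem (by simp [h8, h9]),
        Finset.card_insert_of_notMem (by simp [h10]),
        Finset.card_singleton]
  have huniv : ({a, b, c, d, e} : Finset V) = Finset.univ :=
    Finset.eq_univ_of_card _ (by rw [hcard5, hV])
  intro x
  have := huniv ▸ Finset.mem_univ x
  simpa [Finset.mem_insert] using this

lemma isP5_of_not {V : Type*} [Fintype V] {G : SimpleGraph V}
    (hV : Fintype.card V = 5) (hG : G.Connected)
    (h2 : ¬DiamTwo G) (hd : ¬DomPair G) : IsP5 G := by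
  classical
  rw [DiamTwo] at h2; push_neg at h2
  obtain ⟨u, v, huv, hnadj, hnc⟩ := h2
  rw [DomPair] at hd; push_neg at hd
  obtain ⟨p, hp⟩ : ∃ p : G.Walk u v, p.IsPath := by
    obtain ⟨w⟩ := hG.preconnected u v
    exact ⟨w.toPath, w.toPath.2⟩
  rcases p with _ | ⟨h1, q⟩
  · exact absurd rfl huv
  rename_i a
  rcases q with _ | ⟨h2', r⟩
  · exact absurd h1 hnadj
  rename_i b
  rcases r with _ | ⟨h3, s⟩
  · exact absurd h2' (hnc a h1)
  rename_i c
  rcases s with _ | ⟨h4, t⟩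
  · -- length 3 path: u - a - b - v  (here c = v)
    simp only [SimpleGraph.Walk.isPath_def, SimpleGraph.Walk.support_cons,
      SimpleGraph.Walk.support_nil] at hp
    simp at hp
    obtain ⟨⟨hua, hub, huv'⟩, ⟨hab, hav⟩, hbv⟩ := hp
    obtain ⟨w, hw⟩ := exists_notin hV u a b v
    simp only [Finset.mem_insert, Finset.mem_singleton, not_or] at hw
    obtain ⟨hwu, hwa, hwb, hwv⟩ := hw
    have cover := cover_of_card5 hV u a b v w hua hub huv' (Ne.symm hwu) hab hav
      (Ne.symm hwa) hbv (Ne.symm hwb) (Ne.symm hwv)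
    -- non-adjacencies
    have hnub : ¬G.Adj u b := fun h => hnc b h h3
    have hnav : ¬G.Adj a v := fun h => hnc a h1 h
    -- w is not adjacent to a nor b (else a-b is a dominating edge)
    obtain ⟨z, hz1, hz2, hz3, hz4⟩ := hd a b h2'
    have hzw : z = w := by
      rcases cover z with rfl | rfl | rfl | rfl | rfl
      · exact absurd h1 hz3
      · exact absurd rfl hz1
      · exact absurd rfl hz2
      · exact absurd h3.symm hz4
      · rfl
    rw [hzw] at hz3 hz4
    -- w has a neighbor among u, v
    have hne : G.Adj w u ∨ G.Adj w v := by
      obtain ⟨q⟩ := hG.preconnected w u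
      rcases q with _ | ⟨hq, r⟩
      · exact absurd rfl hwu
      rename_i z0
      rcases cover z0 with rfl | rfl | rfl | rfl | rfl
      · exact Or.inl hq
      · exact absurd hq hz3
      · exact absurd hq hz4
      · exact Or.inr hq
      · exact absurd rfl hq.ne
    rcases hne with hwu' | hwv'
    · -- P5 : w - u - a - b - v
      have hnwv : ¬G.Adj w v := fun h => hnc w hwu'.symm h
      exact ⟨w, u, a, b, v, fun x => by rcases cover x with h | h | h | h | h <;> tauto,
        ⟨hwu, hwa, hwb, hwv, hua, hub, huv', hab, hav, hbv⟩,
        ⟨hwu', h1, h2', h3⟩,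
        ⟨hz3, hz4, hnwv, hnub, hnadj, hnav⟩⟩
    · -- P5 : u - a - b - v - w
      have hnuw : ¬G.Adj u w := fun h => hnc w h hwv'
      exact ⟨u, a, b, v, w, fun x => by rcases cover x with h | h | h | h | h <;> tauto,
        ⟨hua, hub, huv', Ne.symm hwu, hab, hav, Ne.symm hwa, hbv, Ne.symm hwb, Ne.symm hwv⟩,
        ⟨h1, h2', h3, hwv'.symm⟩,
        ⟨hnub, hnadj, hnuw, hnav, fun h => hz3 h.symm, fun h => hz4 h.symm⟩⟩
  · -- length ≥ 4
    rcases t with _ | ⟨h5, t'⟩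
    · -- length 4 path: u - a - b - c - v
      simp only [SimpleGraph.Walk.isPath_def, SimpleGraph.Walk.support_cons,
        SimpleGraph.Walk.support_nil] at hp
      simp at hp
      obtain ⟨⟨hua, hub, huc, huv'⟩, ⟨hab, hac, hav⟩, ⟨hbc, hbv⟩, hcv⟩ := hp
      have cover := cover_of_card5 hV u a b c v hua hub huc huv' hab hac hav hbc hbv hcv
      have hnuc : ¬G.Adj u c := fun h => hnc c h h4
      have hnav : ¬G.Adj a v := fun h => hnc a h1 h
      -- dominating-edge failures
      obtain ⟨z, hz1, hz2, hz3, hz4⟩ := hd b c h3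
      have hzu : z = u := by
        rcases cover z with rfl | rfl | rfl | rfl | rfl
        · rfl
        · exact absurd h2' hz3
        · exact absurd rfl hz1
        · exact absurd rfl hz2
        · exact absurd h4.symm hz4
      rw [hzu] at hz3 hz4
      obtain ⟨z, hy1, hy2, hy3, hy4⟩ := hd a b h2'
      have hzv : z = v := by
        rcases cover z with rfl | rfl | rfl | rfl | rfl
        · exact absurd h1 hy3
        · exact absurd rfl hy1
        · exact absurd rfl hy2
        · exact absurd h3.symm hy4
        · rfl
      rw [hzv] at hy3 hy4
      have hnac : ¬G.Adj a c := by
        intro h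
        obtain ⟨z, hx1, hx2, hx3, hx4⟩ := hd a c h
        rcases cover z with rfl | rfl | rfl | rfl | rfl
        · exact hx3 h1
        · exact hx1 rfl
        · exact hx3 h2'.symm
        · exact hx2 rfl
        · exact hx4 h4.symm
      exact ⟨u, a, b, c, v, cover,
        ⟨hua, hub, huc, huv', hab, hac, hav, hbc, hbv, hcv⟩,
        ⟨h1, h2', h3, h4⟩,
        ⟨hz3, hnuc, hnadj, hnac, hnav, fun h => hy4 h.symm⟩⟩
    · -- length ≥ 5 : impossible with 5 vertices
      exfalso
      have hnd := hp.support_nodup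
      have hlen := hnd.length_le_card
      rw [SimpleGraph.Walk.length_support] at hlen
      simp only [SimpleGraph.Walk.length_cons] at hlen
      rw [hV] at hlen
      omega


theorem rvc_add_compl_le_four {V : Type*} [Fintype V] (G : SimpleGraph V)
    (hV : Fintype.card V = 5) (hG : G.Connected) (hGc : Gᶜ.Connected) :
    rvc G + rvc Gᶜ ≤ 4 := by
  by_cases hA : DiamTwo G
  · by_cases hB : DiamTwo Gᶜ
    · have := rvc_le_one_of_diamTwo hA
      have := rvc_le_one_of_diamTwo hB
      omega
    · by_cases hC : DomPair Gᶜ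
      · have := rvc_le_one_of_diamTwo hA
        have := rvc_le_two_of_domPair hC
        omega
      · have hp5 : IsP5 Gᶜ := isP5_of_not hV hGc hB hC
        have := rvc_le_one_of_diamTwo hA
        have := rvc_le_three_of_isP5 hp5
        omega
  · by_cases hD : DomPair G
    · by_cases hB : DiamTwo Gᶜ
      · have := rvc_le_two_of_domPair hD
        have := rvc_le_one_of_diamTwo hB
        omega
      · by_cases hC : DomPair Gᶜ
        · have := rvc_le_two_of_domPair hD
          have := rvc_le_two_of_domPair hC
          omega
        · have hp5 : IsP5 Gᶜ := isP5_of_not hV hGc hB hC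
          have : DiamTwo Gᶜᶜ := diamTwo_compl_of_isP5 hp5
          rw [compl_compl] at this
          exact absurd this hA
    · have hp5 : IsP5 G := isP5_of_not hV hG hA hD
      have := rvc_le_three_of_isP5 hp5
      have : DiamTwo Gᶜ := diamTwo_compl_of_isP5 hp5
      have := rvc_le_one_of_diamTwo this
      omega
end

section
/- If P is a path on n ≥ 5 vertices, then the complement of P has diameter 2, and hence rvc(complement of P) = 1; consequently rvc(P) + rvc(complement of P) = n − 1. -/
open SimpleGraph

/-!
A rainbow path between two vertices has at most `k` inner vertices when `k` colours are used, so
`rvc G ≥ ediam G - 1`; and if `ediam G ≤ 2` a single colour suffices, since every pair is then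
joined by a path with at most one inner vertex.

In the path `0 - 1 - ⋯ - (n-1)` the walk from one end to the other visits every vertex, so the
diameter is at least `n - 1`. Conversely the colouring `i ↦ i - 1` uses `n - 2` colours and is
injective away from the two leaves, which cannot be inner vertices of a path.

For `n ≥ 5`, two vertices `m, m + 1` adjacent in the path have the common neighbour `m + 3` or
`m - 2` in the complement, so the complement has diameter exactly `2`.
-/

namespace SimpleGraph

variable {V : Type*} {G : SimpleGraph V} {u v : V}

lemma Walk.length_support_tail_dropLast (p : G.Walk u v) :
    p.support.tail.dropLast.length = p.length - 1 := by
  simp only [List.length_dropLast, List.length_tail, p.length_support, Nat.add_sub_cancel]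

lemma Walk.IsPath.exists_ne_adj_adj_of_mem_tail_dropLast {p : G.Walk u v} (hp : p.IsPath)
    {x : V} (hx : x ∈ p.support.tail.dropLast) : ∃ a b, a ≠ b ∧ G.Adj x a ∧ G.Adj x b := by
  induction p with
  | nil => simp at hx
  | @cons u w v huw q ih =>
    obtain ⟨hq, hu⟩ := Walk.cons_isPath_iff huw q |>.mp hp
    cases q with
    | nil => simp at hx
    | @cons _ y _ hwy q' =>
      rw [Walk.support_cons, List.tail_cons, Walk.support_cons,
        List.dropLast_cons_of_ne_nil q'.support_ne_nil, List.mem_cons] at hx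
      rcases hx with rfl | hx
      · refine ⟨u, y, ?_, huw.symm, hwy⟩
        rintro rfl
        exact hu (by simp)
      · exact ih hq (by simpa using hx)

end SimpleGraph

section

variable {V : Type*} {G : SimpleGraph V}

lemma IsRainbowVCColoring.ediam_le {c : V → ℕ} {k : ℕ} (hc : IsRainbowVCColoring G c k) :
    G.ediam ≤ k + 1 := by
  refine ediam_le_of_edist_le fun u v => ?_
  obtain ⟨p, -, hnd, hlt⟩ := hc u v
  have hcolors : (p.support.tail.dropLast.map c).length ≤ k := by
    refine (List.subperm_of_subset hnd fun i hi => ?_).length_le.trans_eq List.length_range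
    obtain ⟨x, hx, rfl⟩ := List.mem_map.mp hi
    exact List.mem_range.mpr (hlt x hx)
  have hp : p.length ≤ k + 1 := by
    rw [List.length_map, p.length_support_tail_dropLast] at hcolors
    omega
  exact (edist_le p).trans (by exact_mod_cast hp)

lemma isRainbowVCColoring_const_of_ediam_le_two (h : G.ediam ≤ 2) :
    IsRainbowVCColoring G (fun _ => 0) 1 := by
  intro u v
  have hreach : G.Reachable u v :=
    reachable_of_edist_ne_top (ne_top_of_le_ne_top (by decide) (edist_le_ediam.trans h))
  obtain ⟨p, hp, hlen⟩ := hreach.exists_path_of_dist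
  have hdist : G.dist u v ≤ 2 := by
    exact_mod_cast hreach.coe_dist_eq_edist ▸ edist_le_ediam.trans h
  have hshort : p.support.tail.dropLast.length ≤ 1 := by
    rw [p.length_support_tail_dropLast]
    omega
  refine ⟨p, hp, ?_, fun _ _ => Nat.one_pos⟩
  match p.support.tail.dropLast, hshort with
  | [], _ => simp
  | [_], _ => simp

lemma rvc_eq_of_isRainbowVCColoring {c : V → ℕ} {k : ℕ} (hc : IsRainbowVCColoring G c k)
    (hmin : ∀ c' m, IsRainbowVCColoring G c' m → k ≤ m) : rvc G = k :=
  le_antisymm (Nat.sInf_le ⟨c, hc⟩) (le_csInf ⟨k, c, hc⟩ fun _ ⟨c', hc'⟩ => hmin c' _ hc')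

lemma rvc_eq_one_of_ediam_eq_two (h : G.ediam = 2) : rvc G = 1 := by
  refine rvc_eq_of_isRainbowVCColoring (isRainbowVCColoring_const_of_ediam_le_two h.le)
    fun c m hc => Nat.one_le_iff_ne_zero.mpr ?_
  rintro rfl
  have := h ▸ hc.ediam_le
  norm_num at this

end

namespace SimpleGraph

lemma pathGraph_pos_and_lt_of_adj_of_adj {n : ℕ} {x a b : Fin n} (hab : a ≠ b)
    (ha : (pathGraph n).Adj x a) (hb : (pathGraph n).Adj x b) : 0 < x.val ∧ x.val + 1 < n := by
  rw [pathGraph_adj] at ha hb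
  rw [Ne, Fin.ext_iff] at hab
  omega

lemma isRainbowVCColoring_pathGraph (n : ℕ) :
    IsRainbowVCColoring (pathGraph n) (fun i => i.val - 1) (n - 2) := by
  intro u v
  obtain ⟨p, hp, -⟩ := (pathGraph_preconnected n u v).exists_path_of_dist
  have hinner : ∀ x ∈ p.support.tail.dropLast, 0 < x.val ∧ x.val + 1 < n := fun x hx => by
    obtain ⟨a, b, hab, ha, hb⟩ := hp.exists_ne_adj_adj_of_mem_tail_dropLast hx
    exact pathGraph_pos_and_lt_of_adj_of_adj hab ha hb
  refine ⟨p, hp, ?_, fun x hx => show x.val - 1 < n - 2 by have := hinner x hx; omega⟩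
  refine List.Nodup.map_on (fun x hx y hy hxy => ?_)
    (hp.support_nodup.sublist ((List.dropLast_sublist _).trans (List.tail_sublist _)))
  have := hinner x hx
  have := hinner y hy
  exact Fin.ext (by omega)

lemma Walk.mem_support_pathGraph {n : ℕ} {u v : Fin n} (p : (pathGraph n).Walk u v) {w : Fin n}
    (huw : u ≤ w) (hwv : w ≤ v) : w ∈ p.support := by
  induction p with
  | nil => simp [le_antisymm hwv huw]
  | @cons u x v hux q ih =>
    rw [support_cons, List.mem_cons]
    by_cases hw : w = u
    · exact Or.inl hw
    · simp only [pathGraph_adj, Fin.le_def, Fin.ext_iff] at hux huw hw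
      exact Or.inr (ih (Fin.le_def.mpr (by omega)) hwv)

lemma le_ediam_pathGraph (n : ℕ) : ((n - 1 : ℕ) : ℕ∞) ≤ (pathGraph n).ediam := by
  rcases Nat.eq_zero_or_pos n with rfl | hn
  · simp
  refine le_trans ?_ (edist_le_ediam (u := ⟨0, hn⟩) (v := ⟨n - 1, by omega⟩))
  rw [edist_eq_sInf]
  refine le_sInf (Set.forall_mem_range.mpr fun p => ?_)
  have hall : (Finset.univ : Finset (Fin n)) ⊆ p.support.toFinset := fun w _ =>
    List.mem_toFinset.mpr <| p.mem_support_pathGraph (Fin.le_def.mpr w.val.zero_le)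
      (Fin.le_def.mpr (Nat.le_sub_one_of_lt w.isLt))
  have := (Finset.card_le_card hall).trans (List.toFinset_card_le _)
  rw [Finset.card_univ, Fintype.card_fin, p.length_support] at this
  exact_mod_cast (by omega : n - 1 ≤ p.length)

lemma rvc_pathGraph (n : ℕ) : rvc (pathGraph n) = n - 2 :=
  rvc_eq_of_isRainbowVCColoring (isRainbowVCColoring_pathGraph n) fun _ m hc => by
    have : n - 1 ≤ m + 1 := by exact_mod_cast (le_ediam_pathGraph n).trans hc.ediam_le
    omega

lemma compl_pathGraph_commonNeighbors_nonempty {n : ℕ} (hn : 5 ≤ n) {u v : Fin n}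
    (huv : (pathGraph n).Adj u v) : ((pathGraph n)ᶜ.commonNeighbors u v).Nonempty := by
  rw [pathGraph_adj] at huv
  by_cases hc : max u.val v.val + 2 < n
  · refine ⟨⟨max u.val v.val + 2, hc⟩, ?_⟩
    simp only [mem_commonNeighbors, compl_adj, pathGraph_adj, Ne, Fin.ext_iff]
    omega
  · refine ⟨⟨min u.val v.val - 2, by omega⟩, ?_⟩
    simp only [mem_commonNeighbors, compl_adj, pathGraph_adj, Ne, Fin.ext_iff]
    omega

lemma ediam_compl_pathGraph {n : ℕ} (hn : 5 ≤ n) : (pathGraph n)ᶜ.ediam = 2 := by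
  refine le_antisymm (ediam_le_of_edist_le fun u v => ?_) ?_
  · by_cases h : (pathGraph n)ᶜ.Adj u v ∨ u = v
    · exact (edist_le_one_iff_adj_or_eq.mpr h).trans (by norm_num)
    · obtain ⟨hnadj, hne⟩ := not_or.mp h
      have huv : (pathGraph n).Adj u v := by simpa [compl_adj, hne] using hnadj
      exact (edist_eq_two_iff.mpr
        ⟨hne, hnadj, compl_pathGraph_commonNeighbors_nonempty hn huv⟩).le
  · have h01 : (pathGraph n).Adj ⟨0, by omega⟩ ⟨1, by omega⟩ := pathGraph_adj.mpr (Or.inl rfl)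
    have hedist := edist_eq_two_iff.mpr
      ⟨h01.ne, fun h => (compl_adj _ _ _).mp h |>.2 h01,
        compl_pathGraph_commonNeighbors_nonempty hn h01⟩
    exact hedist ▸ edist_le_ediam

end SimpleGraph

theorem pathGraph_compl (n : ℕ) (hn : 5 ≤ n) :
    (SimpleGraph.pathGraph n)ᶜ.diam = 2 ∧ rvc (SimpleGraph.pathGraph n)ᶜ = 1 ∧
    rvc (SimpleGraph.pathGraph n) + rvc (SimpleGraph.pathGraph n)ᶜ = n - 1 := by
  have hediam := ediam_compl_pathGraph hn
  have hrvc := rvc_eq_one_of_ediam_eq_two hediam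
  refine ⟨by rw [diam, hediam]; rfl, hrvc, ?_⟩
  rw [rvc_pathGraph, hrvc]
  omega
end

section
/- If T is a tree on 5 vertices that is not a path and whose complement is connected, then rvc(complement of T) ≤ 2. -/
open SimpleGraph

section Aux

variable {V : Type*} [Fintype V] [DecidableEq V] (T : SimpleGraph V) [DecidableRel T.Adj]

/-- bad pair -/
def BadPr (u v : V) : Prop := T.Adj u v ∧ ∀ w, w ≠ u → w ≠ v → T.Adj u w ∨ T.Adj v w

variable {T}

lemma badPr_symm {u v : V} (h : BadPr T u v) : BadPr T v u :=
  ⟨h.1.symm, fun w hw hw' => (h.2 w hw' hw).symm⟩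

lemma deg_pos (hV : Fintype.card V = 5) (hT : T.IsTree) (w : V) : 1 ≤ T.degree w := by
  obtain ⟨z, hz⟩ := Fintype.exists_ne_of_one_lt_card (by omega) w
  rw [Nat.one_le_iff_ne_zero, ← Nat.pos_iff_ne_zero]
  rw [T.degree_pos_iff_exists_adj]
  obtain ⟨p⟩ := hT.isConnected.preconnected w z
  cases p with
  | nil => exact absurd rfl hz.symm
  | cons h _ => exact ⟨_, h⟩

lemma deg_le (hV : Fintype.card V = 5) (hc : Tᶜ.Connected) (v : V) : T.degree v ≤ 3 := by
  by_contra hd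
  push_neg at hd
  have hlt : T.degree v ≤ 4 := by
    have := T.degree_lt_card_verts v
    omega
  have h4 : T.degree v = 4 := by omega
  have hsub : T.neighborFinset v ⊆ Finset.univ.erase v := by
    intro w hw
    rw [SimpleGraph.mem_neighborFinset] at hw
    exact Finset.mem_erase.mpr ⟨hw.ne', Finset.mem_univ w⟩
  have heq : T.neighborFinset v = Finset.univ.erase v := by
    apply Finset.eq_of_subset_of_card_le hsub
    rw [Finset.card_erase_of_mem (Finset.mem_univ v), Finset.card_univ, hV,
      T.card_neighborFinset_eq_degree, h4]
  obtain ⟨z, hz⟩ := Fintype.exists_ne_of_one_lt_card (by omega) v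
  obtain ⟨p⟩ := hc.preconnected v z
  cases p with
  | nil => exact absurd rfl hz.symm
  | cons h _ =>
    rename_i x _
    have hadj := (T.compl_adj v x).mp h
    have hx : x ∈ T.neighborFinset v := by
      rw [heq]
      exact Finset.mem_erase.mpr ⟨fun hxx => hadj.1 hxx.symm, Finset.mem_univ x⟩
    rw [SimpleGraph.mem_neighborFinset] at hx
    exact hadj.2 hx

lemma bad_struct (hV : Fintype.card V = 5) (hT : T.IsTree) (hc : Tᶜ.Connected)
    {u v : V} (h : BadPr T u v) :
    T.degree u + T.degree v = 5 ∧ ∀ w, w ≠ u → w ≠ v → T.degree w = 1 := by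
  have hne : u ≠ v := h.1.ne
  have hdegsum : ∑ w, T.degree w = 8 := by
    have h1 := T.sum_degrees_eq_twice_card_edges
    have h2 := hT.card_edgeFinset
    omega
  have hunion : T.neighborFinset u ∪ T.neighborFinset v = Finset.univ := by
    apply Finset.eq_univ_of_forall
    intro w
    rcases eq_or_ne w u with rfl | hwu
    · exact Finset.mem_union_right _ (by rw [SimpleGraph.mem_neighborFinset]; exact h.1.symm)
    rcases eq_or_ne w v with rfl | hwv
    · exact Finset.mem_union_left _ (by rw [SimpleGraph.mem_neighborFinset]; exact h.1)
    rcases h.2 w hwu hwv with ha | ha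
    · exact Finset.mem_union_left _ (by rwa [SimpleGraph.mem_neighborFinset])
    · exact Finset.mem_union_right _ (by rwa [SimpleGraph.mem_neighborFinset])
  have h5le : 5 ≤ T.degree u + T.degree v := by
    have := Finset.card_union_le (T.neighborFinset u) (T.neighborFinset v)
    rw [hunion, Finset.card_univ, hV, T.card_neighborFinset_eq_degree,
      T.card_neighborFinset_eq_degree] at this
    omega
  have hpair : ({u, v} : Finset V) ⊆ Finset.univ := Finset.subset_univ _
  have hsplit : ∑ w ∈ Finset.univ \ {u, v}, T.degree w + ∑ w ∈ ({u, v} : Finset V), T.degree w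
      = ∑ w, T.degree w := Finset.sum_sdiff hpair
  rw [Finset.sum_pair hne] at hsplit
  have hcards : (Finset.univ \ ({u, v} : Finset V)).card = 3 := by
    rw [Finset.card_sdiff_of_subset hpair, Finset.card_univ, hV, Finset.card_pair hne]
  have hslow : 3 ≤ ∑ w ∈ Finset.univ \ {u, v}, T.degree w := by
    have := Finset.card_nsmul_le_sum (Finset.univ \ ({u, v} : Finset V)) (fun x => T.degree x) 1
      (fun x _ => deg_pos hV hT x)
    rw [smul_eq_mul, mul_one, hcards] at this
    exact this
  constructor
  · omega
  · intro w hwu hwv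
    have hw : w ∈ Finset.univ \ ({u, v} : Finset V) := by
      simp [hwu, hwv]
    have herase := Finset.sum_erase_add (Finset.univ \ ({u, v} : Finset V)) (fun x => T.degree x) hw
    beta_reduce at herase
    have hrest : 2 ≤ ∑ x ∈ (Finset.univ \ ({u, v} : Finset V)).erase w, T.degree x := by
      have := Finset.card_nsmul_le_sum ((Finset.univ \ ({u, v} : Finset V)).erase w) (fun x => T.degree x) 1
        (fun x _ => deg_pos hV hT x)
      rw [smul_eq_mul, mul_one, Finset.card_erase_of_mem hw, hcards] at this
      exact this
    have h1 := deg_pos hV hT w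
    have hub : T.degree u + T.degree v ≤ 5 := by omega
    omega

end Aux

section Aux2

variable {V : Type*} [Fintype V] [DecidableEq V] {T : SimpleGraph V} [DecidableRel T.Adj]

lemma bad_extract (hV : Fintype.card V = 5) (hT : T.IsTree) (hc : Tᶜ.Connected)
    {u v : V} (h : BadPr T u v) (hdu : T.degree u = 2) :
    ∃ b e : V, b ≠ u ∧ b ≠ v ∧ e ≠ u ∧ e ≠ v ∧ b ≠ e ∧
      ¬T.Adj u b ∧ ¬T.Adj b e ∧ ¬T.Adj e v := by
  obtain ⟨h5, hleaf⟩ := bad_struct hV hT hc h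
  have hne : u ≠ v := h.1.ne
  have hvmem : v ∈ T.neighborFinset u := (T.mem_neighborFinset u v).mpr h.1
  have hcard : ((T.neighborFinset u).erase v).card = 1 := by
    rw [Finset.card_erase_of_mem hvmem, T.card_neighborFinset_eq_degree, hdu]
  obtain ⟨e, he⟩ := Finset.card_eq_one.mp hcard
  have hemem : e ∈ (T.neighborFinset u).erase v := he ▸ Finset.mem_singleton_self e
  have hev : e ≠ v := (Finset.mem_erase.mp hemem).1
  have hue : T.Adj u e := (T.mem_neighborFinset u e).mp (Finset.mem_erase.mp hemem).2
  have heu : e ≠ u := hue.ne'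
  have hdege : T.degree e = 1 := hleaf e heu hev
  have hNe : T.neighborFinset e = {u} := by
    obtain ⟨x, hx⟩ := Finset.card_eq_one.mp
      (by rw [T.card_neighborFinset_eq_degree, hdege] :
        (T.neighborFinset e).card = 1)
    have hu : u ∈ T.neighborFinset e := (T.mem_neighborFinset e u).mpr hue.symm
    rw [hx] at hu ⊢
    rw [Finset.mem_singleton.mp hu]
  have henv : ¬T.Adj e v := by
    intro hadj
    have hv : v ∈ T.neighborFinset e := (T.mem_neighborFinset e v).mpr hadj
    rw [hNe, Finset.mem_singleton] at hv
    exact hne hv.symm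
  have humem : u ∈ T.neighborFinset v := (T.mem_neighborFinset v u).mpr h.1.symm
  have hdv : T.degree v = 3 := by
    have := deg_le hV hc u
    have := deg_le hV hc v
    omega
  have hbne : ((T.neighborFinset v).erase u).Nonempty := by
    rw [← Finset.card_pos, Finset.card_erase_of_mem humem,
      T.card_neighborFinset_eq_degree, hdv]
    omega
  obtain ⟨b, hbmem⟩ := hbne
  have hbu : b ≠ u := (Finset.mem_erase.mp hbmem).1
  have hvb : T.Adj v b := (T.mem_neighborFinset v b).mp (Finset.mem_erase.mp hbmem).2
  have hbv : b ≠ v := hvb.ne'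
  have hbe : b ≠ e := by
    rintro rfl
    exact henv hvb.symm
  have hdegb : T.degree b = 1 := hleaf b hbu hbv
  have hNb : T.neighborFinset b = {v} := by
    obtain ⟨x, hx⟩ := Finset.card_eq_one.mp
      (by rw [T.card_neighborFinset_eq_degree, hdegb] :
        (T.neighborFinset b).card = 1)
    have hv : v ∈ T.neighborFinset b := (T.mem_neighborFinset b v).mpr hvb.symm
    rw [hx] at hv ⊢
    rw [Finset.mem_singleton.mp hv]
  have hub : ¬T.Adj u b := by
    intro hadj
    have hu : u ∈ T.neighborFinset b := (T.mem_neighborFinset b u).mpr hadj.symm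
    rw [hNb, Finset.mem_singleton] at hu
    exact hne hu
  have hbee : ¬T.Adj b e := by
    intro hadj
    have he' : e ∈ T.neighborFinset b := (T.mem_neighborFinset b e).mpr hadj
    rw [hNb, Finset.mem_singleton] at he'
    exact hev he'
  exact ⟨b, e, hbu, hbv, heu, hev, hbe, hub, hbee, henv⟩

end Aux2

section Walks

variable {V : Type*} {G : SimpleGraph V}

lemma walk2 {u w v : V} (h1 : G.Adj u w) (h2 : G.Adj w v) (huv : u ≠ v) :
    ∃ p : G.Walk u v, p.IsPath ∧ p.support.tail.dropLast = [w] := by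
  refine ⟨Walk.cons h1 (Walk.cons h2 Walk.nil), ?_, ?_⟩
  · rw [Walk.isPath_def]
    simp [h1.ne, h2.ne, huv]
  · simp

lemma walk3 {u w x v : V} (h1 : G.Adj u w) (h2 : G.Adj w x) (h3 : G.Adj x v)
    (huv : u ≠ v) (hux : u ≠ x) (hwv : w ≠ v) :
    ∃ p : G.Walk u v, p.IsPath ∧ p.support.tail.dropLast = [w, x] := by
  refine ⟨Walk.cons h1 (Walk.cons h2 (Walk.cons h3 Walk.nil)), ?_, ?_⟩
  · rw [Walk.isPath_def]
    simp [h1.ne, h2.ne, h3.ne, huv, hux, hwv]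
  · simp

end Walks

theorem rvc_compl_tree_not_path {V : Type*} [Fintype V] (T : SimpleGraph V)
    (hV : Fintype.card V = 5) (hT : T.IsTree)
    (hnp : ¬ Nonempty (T ≃g SimpleGraph.pathGraph 5))
    (hc : Tᶜ.Connected) : rvc Tᶜ ≤ 2 := by
  classical
  suffices key : ∃ c : V → ℕ, IsRainbowVCColoring Tᶜ c 2 from Nat.sInf_le key
  -- generic handler for a pair, given the bad case is handled
  have pair_walk : ∀ (c : V → ℕ), (∀ x, c x < 2) → ∀ u v : V,
      (BadPr T u v → ∃ p : Tᶜ.Walk u v, p.IsPath ∧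
        (p.support.tail.dropLast.map c).Nodup ∧
        ∀ x ∈ p.support.tail.dropLast, c x < 2) →
      ∃ p : Tᶜ.Walk u v, p.IsPath ∧
        (p.support.tail.dropLast.map c).Nodup ∧
        ∀ x ∈ p.support.tail.dropLast, c x < 2 := by
    intro c hcb u v hbadcase
    rcases eq_or_ne u v with rfl | hne
    · exact ⟨Walk.nil, by simp, by simp, by simp⟩
    by_cases hadj : Tᶜ.Adj u v
    · refine ⟨Walk.cons hadj Walk.nil, ?_, by simp, by simp⟩
      rw [Walk.isPath_def]; simp [hne]
    have htuv : T.Adj u v := by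
      by_contra hno
      exact hadj ((T.compl_adj u v).mpr ⟨hne, hno⟩)
    by_cases hw : ∃ w, w ≠ u ∧ w ≠ v ∧ ¬T.Adj u w ∧ ¬T.Adj v w
    · obtain ⟨w, h1, h2, h3, h4⟩ := hw
      have a1 : Tᶜ.Adj u w := (T.compl_adj u w).mpr ⟨h1.symm, h3⟩
      have a2 : Tᶜ.Adj w v := (T.compl_adj w v).mpr ⟨h2, fun h => h4 h.symm⟩
      obtain ⟨p, hp, hsup⟩ := walk2 a1 a2 hne
      exact ⟨p, hp, by rw [hsup]; simp, by rw [hsup]; simpa using hcb w⟩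
    · apply hbadcase
      refine ⟨htuv, fun w hwu hwv => ?_⟩
      push_neg at hw
      by_cases h3 : T.Adj u w
      · exact Or.inl h3
      · exact Or.inr (hw w hwu hwv h3)
  by_cases hbad : ∃ u v, BadPr T u v ∧ T.degree u = 2
  · obtain ⟨u₀, v₀, hB, hdu₀⟩ := hbad
    obtain ⟨b₀, e₀, hb0u, hb0v, he0u, he0v, hbe, hub, hbee, hev⟩ :=
      bad_extract hV hT hc hB hdu₀
    obtain ⟨hleafsum, hleaf₀⟩ := bad_struct hV hT hc hB
    refine ⟨fun x => if x = b₀ then 1 else 0, ?_⟩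
    intro u v
    apply pair_walk _ (fun x => by split <;> omega)
    intro hB'
    -- uniqueness of the bad pair
    obtain ⟨h5', _⟩ := bad_struct hV hT hc hB'
    have hdu2 : 2 ≤ T.degree u := by
      have := deg_le hV hc v; omega
    have hdv2 : 2 ≤ T.degree v := by
      have := deg_le hV hc u; omega
    have huu : u = u₀ ∨ u = v₀ := by
      by_contra hcon
      push_neg at hcon
      have := hleaf₀ u hcon.1 hcon.2
      omega
    have hvv : v = u₀ ∨ v = v₀ := by
      by_contra hcon
      push_neg at hcon
      have := hleaf₀ v hcon.1 hcon.2
      omega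
    have hneuv : u ≠ v := hB'.1.ne
    have a1 : Tᶜ.Adj u₀ b₀ := (T.compl_adj u₀ b₀).mpr ⟨hb0u.symm, hub⟩
    have a2 : Tᶜ.Adj b₀ e₀ := (T.compl_adj b₀ e₀).mpr ⟨hbe, hbee⟩
    have a3 : Tᶜ.Adj e₀ v₀ := (T.compl_adj e₀ v₀).mpr ⟨he0v, hev⟩
    have hu0v0 : u₀ ≠ v₀ := hB.1.ne
    rcases huu with rfl | rfl <;> rcases hvv with rfl | rfl
    · exact absurd rfl hneuv
    · -- u = u₀, v = v₀ : path u₀ b₀ e₀ v₀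
      obtain ⟨p, hp, hsup⟩ := walk3 a1 a2 a3 hu0v0 he0u.symm hb0v
      refine ⟨p, hp, ?_, ?_⟩
      · rw [hsup]
        simp [hbe, hbe.symm]
      · rw [hsup]
        intro x hx
        split <;> omega
    · -- u = v₀, v = u₀ : path v₀ e₀ b₀ u₀
      obtain ⟨p, hp, hsup⟩ := walk3 a3.symm a2.symm a1.symm hu0v0.symm hb0v.symm he0u
      refine ⟨p, hp, ?_, ?_⟩
      · rw [hsup]
        simp [hbe, hbe.symm]
      · rw [hsup]
        intro x hx
        split <;> omega
    · exact absurd rfl hneuv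
  · refine ⟨fun _ => 0, ?_⟩
    intro u v
    apply pair_walk _ (fun x => by omega)
    intro hB'
    exfalso
    apply hbad
    have hdu3 := deg_le hV hc u
    have hdv3 := deg_le hV hc v
    obtain ⟨h5', _⟩ := bad_struct hV hT hc hB'
    rcases Nat.lt_or_ge (T.degree u) 3 with h | h
    · exact ⟨u, v, hB', by omega⟩
    · exact ⟨v, u, badPr_symm hB', by omega⟩
end
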